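/- arXiv:2601.06699 — 4 statements merged into one kernel-verified Lean document; each statement's English description precedes it below -/
import Mathlib

section
/- Let N ≥ 3 and let b, p, c_f, c_l be reals with 0 < c_l < c_f < b and p > 0. Define h(q) = N·q·(b+p)·(1−q)^(N−1) − N·q·c_l + (c_l − c_f)·(1 − (1−q)^N). Then there exists q* in the open interval (0,1) with h(q*) = 0. -/
theorem h_has_root_in_Ioo (N : ℕ) (hN : 3 ≤ N) (b p c_f c_l : ℝ)
    (hcl : 0 < c_l) (hclf : c_l < c_f) (hcfb : c_f < b) (hp : 0 < p) :
    let h : ℝ → ℝ := fun q =>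
      N * q * (b + p) * (1 - q) ^ (N - 1) - N * q * c_l + (c_l - c_f) * (1 - (1 - q) ^ N)
    ∃ q : ℝ, q ∈ Set.Ioo (0 : ℝ) 1 ∧ h q = 0 := by
  intro h
  have hbp : (0:ℝ) < b + p := by linarith
  set r : ℝ := c_f / (b + p) with hr
  have hr0 : 0 < r := div_pos (by linarith) hbp
  have hr1 : r < 1 := (div_lt_one hbp).mpr (by linarith)
  have hrc : (b + p) * r = c_f := by
    rw [hr]; field_simp
  have hN3 : (3:ℝ) ≤ (N:ℝ) := by exact_mod_cast hN
  have hN1 : (2:ℝ) ≤ (N:ℝ) - 1 := by linarith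
  set a : ℝ := (1 - r) / (2 * ((N:ℝ) - 1)) with ha
  have ha0 : 0 < a := div_pos (by linarith) (by linarith)
  have ha1 : a < 1 := by
    rw [ha, div_lt_one (by linarith)]; linarith
  have hcast : ((N - 1 : ℕ) : ℝ) = (N:ℝ) - 1 := by
    have : 1 ≤ N := by omega
    push_cast [Nat.cast_sub this]; ring
  -- Bernoulli's inequality
  have bern : ∀ n : ℕ, 1 - (n:ℝ) * a ≤ (1 - a) ^ n := by
    intro n
    have := one_add_mul_le_pow (a := -a) (by linarith) n
    simpa [sub_eq_add_neg, mul_neg, mul_comm] using this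
  have hNa : ((N:ℝ) - 1) * a = (1 - r) / 2 := by
    rw [ha]; field_simp
  have p1 : (1 + r) / 2 ≤ (1 - a) ^ (N - 1) := by
    have := bern (N - 1)
    rw [hcast] at this
    linarith [this, hNa]
  have p2 : 1 - (1 - a) ^ N ≤ (N:ℝ) * a := by
    have := bern N; linarith
  -- h a > 0
  have hha : 0 < h a := by
    show 0 < (N:ℝ) * a * (b + p) * (1 - a) ^ (N - 1) - (N:ℝ) * a * c_l
        + (c_l - c_f) * (1 - (1 - a) ^ N)
    have h1 : (b + p) * ((1 + r) / 2) ≤ (b + p) * (1 - a) ^ (N - 1) :=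
      mul_le_mul_of_nonneg_left p1 hbp.le
    have h2 : (c_l - c_f) * ((N:ℝ) * a) ≤ (c_l - c_f) * (1 - (1 - a) ^ N) :=
      mul_le_mul_of_nonpos_left p2 (by linarith)
    have hNapos : 0 < (N:ℝ) * a := by positivity
    nlinarith [mul_le_mul_of_nonneg_left h1 hNapos.le]
  -- h 1 < 0
  have hh1 : h 1 < 0 := by
    show (N:ℝ) * 1 * (b + p) * (1 - 1) ^ (N - 1) - (N:ℝ) * 1 * c_l
        + (c_l - c_f) * (1 - (1 - 1) ^ N) < 0
    have hN1' : N - 1 ≠ 0 := by omega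
    have hNne : N ≠ 0 := by omega
    rw [sub_self, zero_pow hN1', zero_pow hNne]
    nlinarith
  -- IVT
  have hcont : Continuous h := by
    apply Continuous.add
    · exact ((continuous_const.mul continuous_id).mul continuous_const |>.mul
        ((continuous_const.sub continuous_id).pow _)).sub
        ((continuous_const.mul continuous_id).mul continuous_const)
    · exact continuous_const.mul
        (continuous_const.sub ((continuous_const.sub continuous_id).pow _))
  have hsub : Set.Ioo (h 1) (h a) ⊆ h '' Set.Ioo a 1 :=
    intermediate_value_Ioo' ha1.le hcont.continuousOn
  obtain ⟨q, hq, hq0⟩ := hsub ⟨hh1, hha⟩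
  exact ⟨q, ⟨lt_trans ha0 hq.1, hq.2⟩, hq0⟩
end

section
/- Let N ≥ 3 and let b, p, c_f, c_l be reals with 0 < c_l < c_f < b and p > 0. Define h(q) = N·q·(b+p)·(1−q)^(N−1) − N·q·c_l + (c_l − c_f)·(1 − (1−q)^N). Then h has exactly one root in the open interval (0,1). -/
noncomputable def Faux (N : ℕ) (b p c_f c_l : ℝ) : ℝ → ℝ := fun q =>
  (b + p) - c_l * ((1 - q)⁻¹) ^ (N - 1)
    - ((c_f - c_l) / N) * ∑ j ∈ Finset.range N, ((1 - q)⁻¹) ^ j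

lemma Faux_identity (N : ℕ) (hN : 3 ≤ N) (b p c_f c_l : ℝ) {q : ℝ} (hq1 : q < 1) :
    N * q * (b + p) * (1 - q) ^ (N - 1) - N * q * c_l + (c_l - c_f) * (1 - (1 - q) ^ N)
      = N * q * (1 - q) ^ (N - 1) * Faux N b p c_f c_l q := by
  have hNne : (N : ℝ) ≠ 0 := Nat.cast_ne_zero.mpr (by omega)
  have ht : (0:ℝ) < 1 - q := by linarith
  have htne : (1 - q) ≠ 0 := ht.ne'
  have hA : (1 - q) ^ (N - 1) * ((1 - q)⁻¹) ^ (N - 1) = 1 := by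
    rw [← mul_pow, mul_inv_cancel₀ htne, one_pow]
  have hB : (1 - q) ^ (N - 1) * ∑ j ∈ Finset.range N, ((1 - q)⁻¹) ^ j
      = ∑ k ∈ Finset.range N, (1 - q) ^ k := by
    rw [Finset.mul_sum]
    rw [show (∑ j ∈ Finset.range N, (1 - q) ^ (N - 1) * ((1 - q)⁻¹) ^ j)
        = ∑ j ∈ Finset.range N, (1 - q) ^ (N - 1 - j) from
      Finset.sum_congr rfl fun j hj => by
        have hjN : j ≤ N - 1 := by
          have := Finset.mem_range.mp hj; omega
        calc (1 - q) ^ (N - 1) * ((1 - q)⁻¹) ^ j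
            = (1 - q) ^ (N - 1 - j) * ((1 - q) ^ j * ((1 - q)⁻¹) ^ j) := by
              rw [← mul_assoc, ← pow_add, Nat.sub_add_cancel hjN]
          _ = (1 - q) ^ (N - 1 - j) := by
              rw [← mul_pow, mul_inv_cancel₀ htne, one_pow, mul_one]]
    exact Finset.sum_range_reflect (fun k => (1 - q) ^ k) N
  have hC : q * ∑ k ∈ Finset.range N, (1 - q) ^ k = 1 - (1 - q) ^ N := by
    linear_combination -geom_sum_mul (1 - q) N
  unfold Faux
  symm
  calc N * q * (1 - q) ^ (N - 1) *
        ((b + p) - c_l * ((1 - q)⁻¹) ^ (N - 1)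
          - ((c_f - c_l) / N) * ∑ j ∈ Finset.range N, ((1 - q)⁻¹) ^ j)
      = N * q * (b + p) * (1 - q) ^ (N - 1)
          - N * q * c_l * ((1 - q) ^ (N - 1) * ((1 - q)⁻¹) ^ (N - 1))
          - ((c_f - c_l) / N) * N *
            (q * ((1 - q) ^ (N - 1) * ∑ j ∈ Finset.range N, ((1 - q)⁻¹) ^ j)) := by
        ring
    _ = N * q * (b + p) * (1 - q) ^ (N - 1)
          - N * q * c_l * 1
          - ((c_f - c_l) / N) * N * (1 - (1 - q) ^ N) := by
        rw [hA, hB, hC]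
    _ = N * q * (b + p) * (1 - q) ^ (N - 1) - N * q * c_l
          + (c_l - c_f) * (1 - (1 - q) ^ N) := by
        field_simp
        ring

lemma Faux_strictAnti (N : ℕ) (hN : 3 ≤ N) (b p c_f c_l : ℝ)
    (hcl : 0 < c_l) (hclf : c_l < c_f) :
    StrictAntiOn (Faux N b p c_f c_l) (Set.Ico 0 1) := by
  intro x hx y hy hxy
  have hx1 : x < 1 := hx.2
  have hy1 : y < 1 := hy.2
  have htx : (0:ℝ) < 1 - x := by linarith
  have hty : (0:ℝ) < 1 - y := by linarith
  have huv : (1 - x)⁻¹ < (1 - y)⁻¹ := by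
    apply inv_strictAnti₀ hty; linarith
  have hu0 : (0:ℝ) < (1 - x)⁻¹ := inv_pos.mpr htx
  have hNe : N - 1 ≠ 0 := by omega
  have h1 : c_l * ((1 - x)⁻¹) ^ (N - 1) < c_l * ((1 - y)⁻¹) ^ (N - 1) := by
    exact mul_lt_mul_of_pos_left (pow_lt_pow_left₀ huv hu0.le hNe) hcl
  have hcoef : (0:ℝ) < (c_f - c_l) / N := by
    apply div_pos (by linarith)
    exact_mod_cast Nat.pos_of_ne_zero (by omega)
  have h2 : ((c_f - c_l) / N) * ∑ j ∈ Finset.range N, ((1 - x)⁻¹) ^ j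
      ≤ ((c_f - c_l) / N) * ∑ j ∈ Finset.range N, ((1 - y)⁻¹) ^ j := by
    apply mul_le_mul_of_nonneg_left _ hcoef.le
    exact Finset.sum_le_sum fun j _ => pow_le_pow_left₀ hu0.le huv.le j
  unfold Faux
  linarith

lemma Faux_continuousOn (N : ℕ) (b p c_f c_l : ℝ) {a : ℝ} (ha : a < 1) :
    ContinuousOn (Faux N b p c_f c_l) (Set.Icc 0 a) := by
  have hinv : ContinuousOn (fun q : ℝ => (1 - q)⁻¹) (Set.Icc 0 a) := by
    apply ContinuousOn.inv₀ (by fun_prop)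
    intro x hx
    have := hx.2
    intro hc; nlinarith [hx.2]
  unfold Faux
  apply ContinuousOn.sub
  · exact ContinuousOn.sub continuousOn_const (ContinuousOn.mul continuousOn_const (hinv.pow _))
  · exact ContinuousOn.mul continuousOn_const
      (continuousOn_finset_sum _ fun j _ => hinv.pow _)

theorem h_has_unique_root_in_Ioo (N : ℕ) (hN : 3 ≤ N) (b p c_f c_l : ℝ)
    (hcl : 0 < c_l) (hclf : c_l < c_f) (hcfb : c_f < b) (hp : 0 < p) :
    let h : ℝ → ℝ := fun q =>
      N * q * (b + p) * (1 - q) ^ (N - 1) - N * q * c_l + (c_l - c_f) * (1 - (1 - q) ^ N)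
    ∃! q : ℝ, q ∈ Set.Ioo (0 : ℝ) 1 ∧ h q = 0 := by
  intro h
  set F := Faux N b p c_f c_l with hF
  have hbp : (0:ℝ) < b + p := by linarith
  have hNpos : (0:ℝ) < N := by exact_mod_cast Nat.pos_of_ne_zero (by omega)
  -- F 0 > 0
  have hF0 : 0 < F 0 := by
    have : F 0 = b + p - c_f := by
      simp only [hF, Faux, sub_zero, inv_one, one_pow, Finset.sum_const, Finset.card_range,
        nsmul_eq_mul, mul_one]
      field_simp
      ring
    rw [this]; linarith
  -- the point q₀ where F is negative
  set m := min (2⁻¹ : ℝ) (c_l / (2 * (b + p))) with hm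
  have hm0 : 0 < m := lt_min (by norm_num) (div_pos hcl (by linarith))
  have hmhalf : m ≤ 2⁻¹ := min_le_left _ _
  set q₀ := 1 - m with hq₀
  have hq₀0 : 0 < q₀ := by rw [hq₀]; linarith
  have hq₀1 : q₀ < 1 := by rw [hq₀]; linarith
  have hs : (1 - q₀)⁻¹ = m⁻¹ := by rw [hq₀]; ring_nf
  have hs2 : (2:ℝ) ≤ m⁻¹ := by
    rw [show (2:ℝ) = (2⁻¹:ℝ)⁻¹ by norm_num]
    exact inv_anti₀ hm0 hmhalf
  have hcls : 2 * (b + p) ≤ c_l * m⁻¹ := by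
    have h1 : m ≤ c_l / (2 * (b + p)) := min_le_right _ _
    have h2 : (2 * (b + p)) / c_l ≤ m⁻¹ := by
      rw [show (2 * (b + p)) / c_l = (c_l / (2 * (b + p)))⁻¹ from (inv_div _ _).symm]
      exact inv_anti₀ hm0 h1
    calc 2 * (b + p) = c_l * (2 * (b + p) / c_l) := by field_simp
      _ ≤ c_l * m⁻¹ := mul_le_mul_of_nonneg_left h2 hcl.le
  have hFq₀ : F q₀ < 0 := by
    have hpow : m⁻¹ ≤ (m⁻¹) ^ (N - 1) :=
      le_self_pow₀ (by linarith) (by omega)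
    have hsum : 0 ≤ ((c_f - c_l) / N) * ∑ j ∈ Finset.range N, (m⁻¹) ^ j := by
      apply mul_nonneg (div_nonneg (by linarith) hNpos.le)
      exact Finset.sum_nonneg fun j _ => pow_nonneg (inv_nonneg.mpr hm0.le) j
    have : F q₀ ≤ (b + p) - c_l * (m⁻¹) ^ (N - 1) := by
      simp only [hF, Faux, hs]
      linarith
    have h2 : c_l * m⁻¹ ≤ c_l * (m⁻¹) ^ (N - 1) :=
      mul_le_mul_of_nonneg_left hpow hcl.le
    linarith
  -- existence via IVT
  have hivt := intermediate_value_Ioo' hq₀0.le (Faux_continuousOn N b p c_f c_l hq₀1)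
  have h0mem : (0:ℝ) ∈ Set.Ioo (F q₀) (F 0) := ⟨hFq₀, hF0⟩
  obtain ⟨q, hqmem, hFq⟩ := hivt h0mem
  have hq01 : q ∈ Set.Ioo (0:ℝ) 1 := ⟨hqmem.1, hqmem.2.trans hq₀1⟩
  have factorne : ∀ x : ℝ, x ∈ Set.Ioo (0:ℝ) 1 → (N:ℝ) * x * (1 - x) ^ (N - 1) ≠ 0 := by
    intro x hx
    have h1 : (0:ℝ) < 1 - x := by have := hx.2; linarith
    exact ne_of_gt (mul_pos (mul_pos hNpos hx.1) (pow_pos h1 _))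
  have hroot : ∀ x : ℝ, x ∈ Set.Ioo (0:ℝ) 1 → (h x = 0 ↔ F x = 0) := by
    intro x hx
    have hid := Faux_identity N hN b p c_f c_l hx.2
    constructor
    · intro hhx
      simp only [h] at hhx
      have : (N:ℝ) * x * (1 - x) ^ (N - 1) * F x = 0 := by rw [← hid]; exact hhx
      rcases mul_eq_zero.mp this with hc | hc
      · exact absurd hc (factorne x hx)
      · exact hc
    · intro hFx
      simp only [h]
      rw [hid]
      simp only [hF] at hFx
      rw [hFx, mul_zero]
  refine ⟨q, ⟨hq01, (hroot q hq01).mpr hFq⟩, ?_⟩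
  rintro q' ⟨hq'01, hq'0⟩
  have hFq' : F q' = 0 := (hroot q' hq'01).mp hq'0
  exact (Faux_strictAnti N hN b p c_f c_l hcl hclf).injOn
    ⟨hq'01.1.le, hq'01.2⟩ ⟨hq01.1.le, hq01.2⟩ (hFq'.trans hFq.symm)
end

section
/- Let N ≥ 3 and let b, p, c_f, c_l be reals with 0 < c_l < c_f < b and p > 0. Let h'(q) = N(b+p)[(1−q)^(N−1) − q(N−1)(1−q)^(N−2)] − N·c_l + N(c_l − c_f)(1−q)^(N−1). Then h'(1) = −N·c_l < 0 and h'(0) = N(b + p − c_f) > 0, and h' has exactly one root in (0,1). -/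
/-!
Substituting `t = 1 - q` and `N = m + 3` turns `h' q / N` into `t ^ (m + 1) * (C * t - D) - c_l`
with `D = (b + p) (m + 2) ≥ 0` and `C - D = b + p + c_l - c_f > c_l`. The polynomial
`t ^ k * (C * t - D)` is `≤ 0` on `[0, D / C]` and strictly increasing on `[D / C, ∞)`, where it
runs from `0` to `C - D > c_l` as `t` goes to `1`, so it takes the value `c_l` exactly once on `(0, 1)`.
-/

open Set

section

variable (k : ℕ) {C D : ℝ}

lemma strictMonoOn_pow_mul_sub (hC : 0 < C) (hD : 0 ≤ D) :
    StrictMonoOn (fun t : ℝ => t ^ k * (C * t - D)) (Ici (D / C)) := by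
  intro s hs t _ hst
  have hs₀ : 0 ≤ s := (div_nonneg hD hC.le).trans hs
  have hCs : 0 ≤ C * s - D := by
    rw [mem_Ici, div_le_iff₀ hC] at hs; linarith
  have htk : 0 < t ^ k := pow_pos (hs₀.trans_lt hst) k
  calc s ^ k * (C * s - D) ≤ t ^ k * (C * s - D) :=
        mul_le_mul_of_nonneg_right (pow_le_pow_left₀ hs₀ hst.le k) hCs
    _ < t ^ k * (C * t - D) := mul_lt_mul_of_pos_left (by nlinarith) htk

lemma existsUnique_pow_mul_sub_eq {c : ℝ} (hD : 0 ≤ D) (hc : 0 < c) (hcCD : c < C - D) :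
    ∃! t : ℝ, t ∈ Ioo (0 : ℝ) 1 ∧ t ^ k * (C * t - D) = c := by
  have hC : 0 < C := by linarith
  have ht₀ : 0 ≤ D / C := div_nonneg hD hC.le
  have ht₀_lt : D / C < 1 := (div_lt_one hC).2 (by linarith)
  have hCt₀ : C * (D / C) = D := mul_div_cancel₀ D hC.ne'
  have below : ∀ t, 0 ≤ t → t ≤ D / C → t ^ k * (C * t - D) < c := fun t ht hle =>
    (mul_nonpos_of_nonneg_of_nonpos (pow_nonneg ht k) (by nlinarith)).trans_lt hc
  obtain ⟨t, ⟨ht_gt, ht_lt⟩, ht⟩ : ∃ t ∈ Ioo (D / C) 1, t ^ k * (C * t - D) = c := by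
    refine intermediate_value_Ioo ht₀_lt.le (by fun_prop) ⟨?_, ?_⟩
    · simpa [hCt₀] using hc
    · simpa using hcCD
  refine ⟨t, ⟨⟨ht₀.trans_lt ht_gt, ht_lt⟩, ht⟩, fun s ⟨⟨hs₀, _⟩, hs⟩ => ?_⟩
  have hs_gt : D / C < s := not_le.1 fun hle => (below s hs₀.le hle).ne hs
  exact (strictMonoOn_pow_mul_sub k hC hD).injOn (mem_Ici.2 hs_gt.le) (mem_Ici.2 ht_gt.le)
    (hs.trans ht.symm)

end

lemma existsUnique_mem_Ioo_one_sub {P : ℝ → Prop} (h : ∃! t : ℝ, t ∈ Ioo (0 : ℝ) 1 ∧ P t) :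
    ∃! q : ℝ, q ∈ Ioo (0 : ℝ) 1 ∧ P (1 - q) := by
  obtain ⟨t, ⟨⟨ht₀, ht₁⟩, ht⟩, huniq⟩ := h
  refine ⟨1 - t, ⟨⟨by linarith, by linarith⟩, by simpa using ht⟩, fun q ⟨⟨hq₀, hq₁⟩, hq⟩ => ?_⟩
  have := huniq (1 - q) ⟨⟨by linarith, by linarith⟩, hq⟩
  linarith

theorem h_prime_unique_root (N : ℕ) (hN : 3 ≤ N) (b p c_f c_l : ℝ)
    (hcl : 0 < c_l) (hclf : c_l < c_f) (hcfb : c_f < b) (hp : 0 < p) :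
    let h' : ℝ → ℝ := fun q =>
      N * (b + p) * ((1 - q) ^ (N - 1) - q * ((N : ℝ) - 1) * (1 - q) ^ (N - 2))
        - N * c_l + N * (c_l - c_f) * (1 - q) ^ (N - 1)
    h' 1 = -(N : ℝ) * c_l ∧ -(N : ℝ) * c_l < 0 ∧
    h' 0 = (N : ℝ) * (b + p - c_f) ∧ (N : ℝ) * (b + p - c_f) > 0 ∧
    ∃! q : ℝ, q ∈ Set.Ioo (0 : ℝ) 1 ∧ h' q = 0 := by
  obtain ⟨m, rfl⟩ : ∃ m, N = m + 3 := ⟨N - 3, by omega⟩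
  intro h'
  set C : ℝ := (b + p) * (m + 3) + c_l - c_f
  set D : ℝ := (b + p) * (m + 2)
  have hN₀ : (0 : ℝ) < (m + 3 : ℕ) := by positivity
  have h'_eq : ∀ q, h' q = (m + 3 : ℕ) * ((1 - q) ^ (m + 1) * (C * (1 - q) - D) - c_l) := by
    intro q
    simp only [h', C, D, show m + 3 - 1 = m + 2 by omega, show m + 3 - 2 = m + 1 by omega]
    push_cast
    ring
  have hbp : 0 < b + p := by linarith
  refine ⟨by rw [h'_eq, sub_self, zero_pow m.succ_ne_zero]; ring, by nlinarith,
    by rw [h'_eq]; push_cast; ring, by nlinarith, ?_⟩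
  simp only [h'_eq, mul_eq_zero, hN₀.ne', false_or, sub_eq_zero]
  exact existsUnique_mem_Ioo_one_sub
    (existsUnique_pow_mul_sub_eq (m + 1) (by positivity) hcl (by linarith))
end

section
/- In the N-player relayer upload game with N ≥ 3, b > c_f > c_l > 0, p > 0, an action profile is a pure-strategy Nash equilibrium if and only if exactly one player chooses U (upload) and all others choose NU. -/
/-- Payoff in the relayer upload game: `a` is the action profile (`true` = Upload),
`first` is the designated first uploader, `i` is the player whose payoff is computed. -/
def relayerPayoff (N : ℕ) (b c_f c_l p : ℝ) (a : Fin N → Bool) (first : Fin N)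
    (i : Fin N) : ℝ :=
  if ∀ j, a j = false then -p
  else if a i = true then (if i = first then b - c_f else b - c_l) else b

/-- A profile is a pure Nash equilibrium (with respect to a first-uploader selection rule
`sel`) if no player can strictly improve by unilaterally changing their own action. -/
def IsNash (N : ℕ) (b c_f c_l p : ℝ) (sel : (Fin N → Bool) → Fin N)
    (a : Fin N → Bool) : Prop :=
  ∀ (i : Fin N) (x : Bool),
    relayerPayoff N b c_f c_l p (Function.update a i x) (sel (Function.update a i x)) i ≤
      relayerPayoff N b c_f c_l p a (sel a) i

theorem pure_nash_iff_exactly_one_uploader (N : ℕ) (hN : 3 ≤ N) (b p c_f c_l : ℝ)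
    (hcl : 0 < c_l) (hclf : c_l < c_f) (hcfb : c_f < b) (hp : 0 < p)
    (sel : (Fin N → Bool) → Fin N)
    (hsel : ∀ a : Fin N → Bool, (∃ j, a j = true) → a (sel a) = true)
    (a : Fin N → Bool) :
    IsNash N b c_f c_l p sel a ↔ (∃! i : Fin N, a i = true) := by
  constructor
  · intro hNash
    by_cases hex : ∃ j, a j = true
    · obtain ⟨i0, hi0⟩ := hex
      -- no two distinct uploaders
      have two : ∀ i j : Fin N, i ≠ j → a i = true → a j = true → i ≠ sel a → False := by
        intro i j hij hi hj his
        have h := hNash i false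
        unfold relayerPayoff at h
        have h1 : ¬ (∀ k, Function.update a i false k = false) := by
          intro hk
          have := hk j
          rw [Function.update_of_ne (Ne.symm hij)] at this
          simp [hj] at this
        have h2 : Function.update a i false i = false := Function.update_self _ _ _
        have h3 : ¬ (∀ k, a k = false) := by
          intro hk; have := hk i; rw [hi] at this; exact Bool.true_eq_false ▸ (by simp at this)
        rw [if_neg h1, if_neg h3, if_pos hi, if_neg his, h2] at h
        simp at h
        linarith
      refine ⟨i0, hi0, ?_⟩
      intro j hj
      by_contra hne
      by_cases hs : i0 = sel a
      · exact two j i0 hne hj hi0 (fun h => hne (h.trans hs.symm))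
      · exact two i0 j (fun h => hne h.symm) hi0 hj hs
    · -- all false: player 0 deviates to upload
      push_neg at hex
      have hall : ∀ k, a k = false := by
        intro k; cases hk : a k with
        | false => rfl
        | true => exact absurd hk (hex k)
      have z : Fin N := ⟨0, by omega⟩
      have h := hNash ⟨0, by omega⟩ true
      unfold relayerPayoff at h
      have h1 : ¬ (∀ k, Function.update a ⟨0, by omega⟩ true k = false) := by
        intro hk
        have := hk ⟨0, by omega⟩
        rw [Function.update_self] at this
        simp at this
      have h2 : Function.update a (⟨0, by omega⟩ : Fin N) true ⟨0, by omega⟩ = true :=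
        Function.update_self _ _ _
      rw [if_neg h1, if_pos hall, h2, if_pos rfl] at h
      exfalso
      split_ifs at h <;> linarith
  · rintro ⟨i0, hi0, huniq⟩
    have honly : ∀ k, k ≠ i0 → a k = false := by
      intro k hk
      cases hkk : a k with
      | false => rfl
      | true => exact absurd (huniq k hkk) hk
    have hnall : ¬ (∀ k, a k = false) := by
      intro hk; have := hk i0; rw [hi0] at this; simp at this
    have hsa : sel a = i0 := huniq _ (hsel a ⟨i0, hi0⟩)
    have hle : ∀ (a' : Fin N → Bool) (f i : Fin N),
        relayerPayoff N b c_f c_l p a' f i ≤ b := by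
      intro a' f i
      unfold relayerPayoff
      split_ifs <;> linarith
    intro i x
    by_cases hii : i = i0
    · subst hii
      have hrhs : relayerPayoff N b c_f c_l p a (sel a) i = b - c_f := by
        unfold relayerPayoff
        rw [if_neg hnall, if_pos hi0, if_pos hsa.symm]
      rw [hrhs]
      cases x with
      | true =>
        have heq : Function.update a i true = a := by
          rw [← hi0]; exact Function.update_eq_self i a
        rw [heq, hrhs]
      | false =>
        have hallf : ∀ k, Function.update a i false k = false := by
          intro k
          by_cases hk : k = i
          · subst hk; exact Function.update_self _ _ _
          · rw [Function.update_of_ne hk]; exact honly k hk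
        unfold relayerPayoff
        rw [if_pos hallf]
        linarith
    · have hai : a i = false := honly i hii
      have hrhs : relayerPayoff N b c_f c_l p a (sel a) i = b := by
        unfold relayerPayoff
        rw [if_neg hnall, hai]
        simp
      rw [hrhs]
      exact hle _ _ _
end
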